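/- Define for a, b, c ∈ ℂ the 4-qubit state |ψ⁽²⁾(a,b,c)⟩ = ((a+c−i)/2)(|0000⟩+|1111⟩) + ((a−c+i)/2)(|0011⟩+|1100⟩) + ((b+c+i)/2)(|0101⟩+|1010⟩) + ((b−c−i)/2)(|0110⟩+|1001⟩) + (i/2)(|0001⟩+|0111⟩+|1000⟩+|1110⟩−|0010⟩−|0100⟩−|1011⟩−|1101⟩). Let P₂₃ swap the second and third tensor factors. Then P₂₃|ψ⁽²⁾(a,b,c)⟩ = |ψ⁽²⁾((a+b)/2+c, (a+b)/2−c, (a−b)/2)⟩. -/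

import Mathlib

noncomputable section

open Complex

/-- The 4-qubit state space `(ℂ²)^⊗4`, realized as functions on the computational basis. -/
abbrev Q4 := Fin 2 × Fin 2 × Fin 2 × Fin 2 → ℂ

/-- The computational basis state `|ijkl⟩`. -/
def ket (i j k l : Fin 2) : Q4 := Pi.single (i, j, k, l) 1

/-- The factor-wise action `A ⊗ B ⊗ C ⊗ D` of four one-qubit operators on `(ℂ²)^⊗4`. -/
def tens4 (A B C D : Matrix (Fin 2) (Fin 2) ℂ) (ψ : Q4) : Q4 := fun x =>
  ∑ y : Fin 2 × Fin 2 × Fin 2 × Fin 2,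
    A x.1 y.1 * B x.2.1 y.2.1 * C x.2.2.1 y.2.2.1 * D x.2.2.2 y.2.2.2 * ψ y

/-- The swap of the second and third tensor factors: `|ijkl⟩ ↦ |ikjl⟩`. -/
def P23 (ψ : Q4) : Q4 := fun x => ψ (x.1, x.2.2.1, x.2.1, x.2.2.2)

/-- The family-2 state `|ψ⁽²⁾(a,b,c)⟩`. -/
def ψ2 (a b c : ℂ) : Q4 :=
  ((a + c - I) / 2) • (ket 0 0 0 0 + ket 1 1 1 1)
  + ((a - c + I) / 2) • (ket 0 0 1 1 + ket 1 1 0 0)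
  + ((b + c + I) / 2) • (ket 0 1 0 1 + ket 1 0 1 0)
  + ((b - c - I) / 2) • (ket 0 1 1 0 + ket 1 0 0 1)
  + (I / 2) • (ket 0 0 0 1 + ket 0 1 1 1 + ket 1 0 0 0 + ket 1 1 1 0
      - ket 0 0 1 0 - ket 0 1 0 0 - ket 1 0 1 1 - ket 1 1 0 1)

lemma P23_add (φ ψ : Q4) : P23 (φ + ψ) = P23 φ + P23 ψ := rfl

lemma P23_sub (φ ψ : Q4) : P23 (φ - ψ) = P23 φ - P23 ψ := rfl

lemma P23_smul (z : ℂ) (ψ : Q4) : P23 (z • ψ) = z • P23 ψ := rfl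

lemma P23_ket (i j k l : Fin 2) : P23 (ket i j k l) = ket i k j l := by
  funext x
  obtain ⟨x₁, x₂, x₃, x₄⟩ := x
  simp only [P23, ket, Pi.single_apply, Prod.mk.injEq]
  exact if_congr (by tauto) rfl rfl

/- On the `I / 2` block the swap only permutes terms of equal sign; it exchanges the blocks
`|0011⟩ + |1100⟩` and `|0101⟩ + |1010⟩`, and the new parameters are exactly those that trade the
coefficients of these two blocks. -/
/-- swapping the two middle qubits maps `|ψ⁽²⁾(a,b,c)⟩` to
`|ψ⁽²⁾((a+b)/2+c, (a+b)/2−c, (a−b)/2)⟩`. -/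
theorem stmt_14 (a b c : ℂ) :
    P23 (ψ2 a b c) = ψ2 ((a + b) / 2 + c) ((a + b) / 2 - c) ((a - b) / 2) := by
  simp only [ψ2, P23_add, P23_sub, P23_smul, P23_ket]
  module
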